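/- arXiv:0909.3135 — 4 statements merged into one kernel-verified Lean document; each statement's English description precedes it below -/
import Mathlib

section
/- With ψ defined by ψ(𝒦) = (|𝒦| − 1)·I(X; X_∅) − H(X_(2^𝒦)|X) + Σ_{𝒜⊆𝒦} H(X_𝒜 | X_(2^𝒜−{𝒜})) for jointly distributed finite random variables X and (X_𝒜)_{𝒜⊆{1,…,L}}, ψ is nondecreasing: if 𝒮 ⊂ 𝒯 ⊆ {1,…,L} then ψ(𝒮) ≤ ψ(𝒯). -/
open scoped BigOperators

namespace MDC

structure FinProb (Ω : Type*) [Fintype Ω] where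
  μ : Ω → ℝ
  nonneg : ∀ ω, 0 ≤ μ ω
  sum_one : ∑ ω, μ ω = 1

variable {Ω : Type*} [Fintype Ω]

/-- Probability that the random variable `f` takes the value `a`. -/
noncomputable def pr (P : FinProb Ω) {A : Type*} [DecidableEq A] (f : Ω → A) (a : A) : ℝ :=
  ∑ ω, if f ω = a then P.μ ω else 0

/-- Shannon entropy (base 2) of a finite random variable. -/
noncomputable def H (P : FinProb Ω) {A : Type*} [Fintype A] [DecidableEq A] (f : Ω → A) : ℝ :=
  - ∑ a, pr P f a * Real.logb 2 (pr P f a)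

/-- Conditional entropy H(f|g). -/
noncomputable def Hcond (P : FinProb Ω) {A B : Type*} [Fintype A] [DecidableEq A]
    [Fintype B] [DecidableEq B] (f : Ω → A) (g : Ω → B) : ℝ :=
  H P (fun ω => (f ω, g ω)) - H P g

/-- Mutual information I(f;g). -/
noncomputable def MI (P : FinProb Ω) {A B : Type*} [Fintype A] [DecidableEq A]
    [Fintype B] [DecidableEq B] (f : Ω → A) (g : Ω → B) : ℝ :=
  H P f + H P g - H P (fun ω => (f ω, g ω))

/-- Conditional mutual information I(f;g|h). -/
noncomputable def CMI (P : FinProb Ω) {A B C : Type*} [Fintype A] [DecidableEq A]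
    [Fintype B] [DecidableEq B] [Fintype C] [DecidableEq C]
    (f : Ω → A) (g : Ω → B) (h : Ω → C) : ℝ :=
  H P (fun ω => (f ω, h ω)) + H P (fun ω => (g ω, h ω))
    - H P (fun ω => (f ω, g ω, h ω)) - H P h

/-- Independence of two finite random variables. -/
def Indep (P : FinProb Ω) {A B : Type*} [DecidableEq A] [DecidableEq B]
    (f : Ω → A) (g : Ω → B) : Prop :=
  ∀ a b, pr P (fun ω => (f ω, g ω)) (a, b) = pr P f a * pr P g b

/-- Conditional independence of `f` and `g` given `h` (a Markov chain f − h − g). -/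
def CondIndep (P : FinProb Ω) {A B C : Type*} [DecidableEq A] [DecidableEq B] [DecidableEq C]
    (f : Ω → A) (g : Ω → B) (h : Ω → C) : Prop :=
  ∀ a b c, pr P h c * pr P (fun ω => (f ω, g ω, h ω)) (a, b, c) =
    pr P (fun ω => (f ω, h ω)) (a, c) * pr P (fun ω => (g ω, h ω)) (b, c)

/-- Binary entropy function. -/
noncomputable def Hb (p : ℝ) : ℝ := -(p * Real.logb 2 p) - (1 - p) * Real.logb 2 (1 - p)

/-- Expected Hamming distortion between two random variables. -/
noncomputable def Edist (P : FinProb Ω) {A : Type*} [DecidableEq A] (f g : Ω → A) : ℝ :=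
  ∑ ω, P.μ ω * (if f ω = g ω then 0 else 1)

end MDC

open MDC

/-- The tuple X_(ℬ) = {X_𝒜 : 𝒜 ∈ ℬ}. -/
def tup {Ω 𝒳 : Type} {L : ℕ} (XA : Finset (Fin L) → Ω → 𝒳)
    (B : Finset (Finset (Fin L))) : Ω → ({A : Finset (Fin L) // A ∈ B} → 𝒳) :=
  fun ω A => XA A.1 ω

/-- The set function ψ of the VKG region. -/
noncomputable def psi {Ω 𝒳0 𝒳 : Type} {L : ℕ} [Fintype Ω] [Fintype 𝒳0] [DecidableEq 𝒳0]
    [Fintype 𝒳] [DecidableEq 𝒳] (P : FinProb Ω) (Xr : Ω → 𝒳0)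
    (XA : Finset (Fin L) → Ω → 𝒳) (K : Finset (Fin L)) : ℝ :=
  ((K.card : ℝ) - 1) * MI P Xr (XA ∅)
    - Hcond P (tup XA K.powerset) Xr
    + ∑ A ∈ K.powerset, Hcond P (XA A) (tup XA (A.powerset.erase A))

/-! In ψ(T) − ψ(S) the terms H(X) cancel, the multiple of I(X; X_∅) grows, and it remains to
bound H(X_(2^T), X) − H(X_(2^S), X) by Σ_{𝒜 ∈ 2^T ∖ 2^S} H(X_𝒜 | X_(2^𝒜−{𝒜})). Add the X_𝒜 with
𝒜 ∈ 2^T ∖ 2^S one at a time in order of increasing |𝒜|: by the chain rule the difference is the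
sum of the entropies of the X_𝒜 conditioned on all variables added before them, which include every
X_𝒜' with 𝒜' ⊊ 𝒜, so conditioning only on those can only increase each term. That conditioning
reduces entropy is Gibbs' inequality, from log x ≤ x − 1. -/

namespace MDC

variable {Ω : Type*} [Fintype Ω] (P : FinProb Ω)

lemma pr_nonneg {A : Type*} [DecidableEq A] (f : Ω → A) (a : A) : 0 ≤ pr P f a :=
  Finset.sum_nonneg fun ω _ => by split_ifs <;> simp [P.nonneg]

lemma mu_le_pr_self {A : Type*} [DecidableEq A] (f : Ω → A) (ω : Ω) : P.μ ω ≤ pr P f (f ω) := by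
  calc P.μ ω = if f ω = f ω then P.μ ω else 0 := by simp
    _ ≤ pr P f (f ω) :=
      Finset.single_le_sum (f := fun ω' => if f ω' = f ω then P.μ ω' else 0)
        (fun ω' _ => by split_ifs <;> simp [P.nonneg]) (Finset.mem_univ ω)

lemma sum_pr_mul {A : Type*} [Fintype A] [DecidableEq A] (f : Ω → A) (G : A → ℝ) :
    ∑ a, pr P f a * G a = ∑ ω, P.μ ω * G (f ω) := by
  simp only [pr, Finset.sum_mul, ite_mul, zero_mul]
  rw [Finset.sum_comm]
  simp

lemma sum_pr {A : Type*} [Fintype A] [DecidableEq A] (f : Ω → A) : ∑ a, pr P f a = 1 := by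
  simpa [P.sum_one] using sum_pr_mul P f fun _ => 1

lemma sum_pr_pair_left {A C : Type*} [Fintype A] [DecidableEq A] [DecidableEq C]
    (f : Ω → A) (h : Ω → C) (c : C) :
    ∑ a, pr P (fun ω => (f ω, h ω)) (a, c) = pr P h c := by
  unfold pr
  rw [Finset.sum_comm]
  refine Finset.sum_congr rfl fun ω _ => ?_
  simp [Prod.ext_iff, ite_and]

lemma H_eq_neg_sum_mu_mul_logb {A : Type*} [Fintype A] [DecidableEq A] (f : Ω → A) :
    H P f = -∑ ω, P.μ ω * Real.logb 2 (pr P f (f ω)) :=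
  congrArg Neg.neg (sum_pr_mul P f _)

lemma H_congr {A B : Type*} [Fintype A] [DecidableEq A] [Fintype B] [DecidableEq B]
    {f : Ω → A} {g : Ω → B} (hfg : ∀ ω ω', f ω = f ω' ↔ g ω = g ω') : H P f = H P g := by
  simp only [H_eq_neg_sum_mu_mul_logb, pr, hfg]

lemma H_const {A : Type*} [Fintype A] [DecidableEq A] (a : A) : H P (fun _ => a) = 0 := by
  simp [H_eq_neg_sum_mu_mul_logb, pr, P.sum_one]

lemma sum_mu_mul_logb_le (w : Ω → ℝ) (hw : ∀ ω, 0 < P.μ ω → 0 < w ω) :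
    ∑ ω, P.μ ω * Real.logb 2 (w ω) ≤ (∑ ω, P.μ ω * w ω - 1) / Real.log 2 := by
  have hlog2 : 0 < Real.log 2 := Real.log_pos one_lt_two
  have hterm : ∀ ω, P.μ ω * Real.logb 2 (w ω) ≤ (P.μ ω * w ω - P.μ ω) / Real.log 2 := by
    intro ω
    rcases (P.nonneg ω).eq_or_lt with h0 | hpos
    · simp [← h0]
    calc P.μ ω * Real.logb 2 (w ω) = P.μ ω * Real.log (w ω) / Real.log 2 := by
          rw [Real.logb, mul_div_assoc]
      _ ≤ P.μ ω * (w ω - 1) / Real.log 2 := by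
          gcongr
          exact Real.log_le_sub_one_of_pos (hw ω hpos)
      _ = (P.μ ω * w ω - P.μ ω) / Real.log 2 := by ring
  calc _ ≤ ∑ ω, (P.μ ω * w ω - P.μ ω) / Real.log 2 := Finset.sum_le_sum fun ω _ => hterm ω
    _ = _ := by rw [← Finset.sum_div, Finset.sum_sub_distrib, P.sum_one]

theorem Hcond_le_Hcond_comp {A B C : Type*} [Fintype A] [DecidableEq A] [Fintype B]
    [DecidableEq B] [Fintype C] [DecidableEq C] (f : Ω → A) (g : Ω → B) (ρ : B → C) :
    Hcond P f g ≤ Hcond P f (fun ω => ρ (g ω)) := by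
  set fg : Ω → A × B := fun ω => (f ω, g ω)
  set c : Ω → C := fun ω => ρ (g ω)
  set fc : Ω → A × C := fun ω => (f ω, c ω)
  -- Gibbs' inequality for `p(a, b)` against `p(a, ρ b) p(b) / p(ρ b)`, which sums to at most 1
  set G : A × B → ℝ := fun x => pr P fc (x.1, ρ x.2) * pr P g x.2 / pr P c (ρ x.2) / pr P fg x
  have hG_eq : ∀ ω, G (fg ω) = pr P fc (fc ω) * pr P g (g ω) / pr P c (c ω) / pr P fg (fg ω) :=
    fun _ => rfl
  have hpr_pos : ∀ ω, 0 < P.μ ω → 0 < pr P fc (fc ω) ∧ 0 < pr P g (g ω) ∧ 0 < pr P c (c ω) ∧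
      0 < pr P fg (fg ω) := fun ω hpos =>
    ⟨hpos.trans_le (mu_le_pr_self P fc ω), hpos.trans_le (mu_le_pr_self P g ω),
      hpos.trans_le (mu_le_pr_self P c ω), hpos.trans_le (mu_le_pr_self P fg ω)⟩
  have hG_sum : ∑ ω, P.μ ω * G (fg ω) ≤ 1 := by
    have hle_mul_div : ∀ x y : ℝ, 0 ≤ y → x * (y / x) ≤ y := by
      intro x y hy
      rcases eq_or_ne x 0 with rfl | hx
      · simpa using hy
      · rw [mul_div_cancel₀ _ hx]
    calc ∑ ω, P.μ ω * G (fg ω) = ∑ x, pr P fg x * G x := (sum_pr_mul P fg G).symm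
      _ ≤ ∑ x : A × B, pr P fc (x.1, ρ x.2) * pr P g x.2 / pr P c (ρ x.2) :=
          Finset.sum_le_sum fun x _ => hle_mul_div _ _ <|
            div_nonneg (mul_nonneg (pr_nonneg P _ _) (pr_nonneg P _ _)) (pr_nonneg P _ _)
      _ = ∑ b, pr P c (ρ b) * (pr P g b / pr P c (ρ b)) := by
          rw [Fintype.sum_prod_type, Finset.sum_comm]
          refine Finset.sum_congr rfl fun b _ => ?_
          have hmarg : ∑ a, pr P fc (a, ρ b) = pr P c (ρ b) := sum_pr_pair_left P f c (ρ b)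
          dsimp only
          rw [← Finset.sum_div, ← Finset.sum_mul, hmarg, mul_div_assoc]
      _ ≤ ∑ b, pr P g b := Finset.sum_le_sum fun b _ => hle_mul_div _ _ (pr_nonneg P g b)
      _ = 1 := sum_pr P g
  have hG_pos : ∀ ω, 0 < P.μ ω → 0 < G (fg ω) := fun ω hpos => by
    obtain ⟨hfc, hg, hc, hfg⟩ := hpr_pos ω hpos
    rw [hG_eq]
    positivity
  have hG_log : ∀ ω, P.μ ω * Real.logb 2 (G (fg ω)) = P.μ ω * (Real.logb 2 (pr P fc (fc ω))
      + Real.logb 2 (pr P g (g ω)) - Real.logb 2 (pr P c (c ω)) - Real.logb 2 (pr P fg (fg ω))) := by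
    intro ω
    rcases (P.nonneg ω).eq_or_lt with h0 | hpos
    · simp [← h0]
    obtain ⟨hfc, hg, hc, hfg⟩ := hpr_pos ω hpos
    rw [hG_eq, Real.logb_div (by positivity) hfg.ne', Real.logb_div (by positivity) hc.ne',
      Real.logb_mul hfc.ne' hg.ne']
  have hgibbs := (sum_mu_mul_logb_le P _ hG_pos).trans
    (div_nonpos_of_nonpos_of_nonneg (sub_nonpos.mpr hG_sum) (Real.log_pos one_lt_two).le)
  simp only [hG_log, mul_add, mul_sub, Finset.sum_add_distrib, Finset.sum_sub_distrib] at hgibbs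
  simp only [Hcond, H_eq_neg_sum_mu_mul_logb]
  linarith

theorem MI_nonneg {A B : Type*} [Fintype A] [DecidableEq A] [Fintype B] [DecidableEq B]
    (f : Ω → A) (g : Ω → B) : 0 ≤ MI P f g := by
  have hcond := Hcond_le_Hcond_comp P f g fun _ => ()
  have hfst : H P (fun ω => (f ω, ())) = H P f := H_congr P fun ω ω' => by simp
  simp only [Hcond, MI, hfst, H_const] at hcond ⊢
  linarith

end MDC

section Tuples

variable {Ω 𝒳 : Type} {L : ℕ}

lemma tup_eq_tup_iff (XA : Finset (Fin L) → Ω → 𝒳) (B : Finset (Finset (Fin L))) (ω ω' : Ω) :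
    tup XA B ω = tup XA B ω' ↔ ∀ A ∈ B, XA A ω = XA A ω' := by
  simp [tup, funext_iff]

variable [Fintype Ω] [Fintype 𝒳] [DecidableEq 𝒳] (P : FinProb Ω)

lemma H_tup_insert {R : Type} [Fintype R] [DecidableEq R] (XA : Finset (Fin L) → Ω → 𝒳)
    (r : Ω → R) (A₀ : Finset (Fin L)) (B : Finset (Finset (Fin L))) :
    H P (fun ω => (tup XA (insert A₀ B) ω, r ω)) = H P (fun ω => (XA A₀ ω, tup XA B ω, r ω)) :=
  H_congr P fun ω ω' => by
    simp only [Prod.mk.injEq, tup_eq_tup_iff, Finset.forall_mem_insert, and_assoc]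

/-- Chain rule, adding the members of `D` in order of increasing cardinality, so that the proper
subsets of each one are present when it is added. -/
theorem H_tup_union_sub_le {R : Type} [Fintype R] [DecidableEq R] (XA : Finset (Fin L) → Ω → 𝒳)
    (r : Ω → R) (B₁ D : Finset (Finset (Fin L)))
    (hD : ∀ A ∈ D, A.powerset.erase A ⊆ B₁ ∪ D) :
    H P (fun ω => (tup XA (B₁ ∪ D) ω, r ω)) - H P (fun ω => (tup XA B₁ ω, r ω))
      ≤ ∑ A ∈ D, Hcond P (XA A) (tup XA (A.powerset.erase A)) := by
  revert hD
  refine Finset.induction_on_max_value Finset.card D (fun _ => ?_) fun A₀ D hA₀ hmax ih hD => ?_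
  · rw [Finset.union_empty, Finset.sum_empty, sub_self]
  have hsub : A₀.powerset.erase A₀ ⊆ B₁ ∪ D := by
    intro A hA
    rcases Finset.mem_union.mp (hD A₀ (Finset.mem_insert_self A₀ D) hA) with hB | hA'
    · exact Finset.mem_union_left D hB
    · exact Finset.mem_union_right B₁
        ((Finset.mem_insert.mp hA').resolve_left (Finset.ne_of_mem_erase hA))
  have hD' : ∀ A ∈ D, A.powerset.erase A ⊆ B₁ ∪ D := by
    intro A hA A' hA'
    rcases Finset.mem_union.mp (hD A (Finset.mem_insert_of_mem hA) hA') with hB | hA'D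
    · exact Finset.mem_union_left D hB
    refine Finset.mem_union_right B₁ ((Finset.mem_insert.mp hA'D).resolve_left ?_)
    rintro rfl
    have hlt : A'.card < A.card := Finset.card_lt_card <| Finset.ssubset_iff_subset_ne.mpr
      ⟨Finset.mem_powerset.mp (Finset.mem_of_mem_erase hA'), Finset.ne_of_mem_erase hA'⟩
    exact (hmax A hA).not_gt hlt
  have hchain : H P (fun ω => (tup XA (B₁ ∪ insert A₀ D) ω, r ω))
      = Hcond P (XA A₀) (fun ω => (tup XA (B₁ ∪ D) ω, r ω))
        + H P (fun ω => (tup XA (B₁ ∪ D) ω, r ω)) := by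
    rw [Finset.union_insert, H_tup_insert, Hcond, sub_add_cancel]
  have hcond : Hcond P (XA A₀) (fun ω => (tup XA (B₁ ∪ D) ω, r ω))
      ≤ Hcond P (XA A₀) (tup XA (A₀.powerset.erase A₀)) :=
    Hcond_le_Hcond_comp P (XA A₀) (fun ω => (tup XA (B₁ ∪ D) ω, r ω))
      fun u (A : {A // A ∈ A₀.powerset.erase A₀}) => u.1 ⟨A.1, hsub A.2⟩
  rw [Finset.sum_insert hA₀]
  linarith [ih hD']

end Tuples

/-- ψ is nondecreasing. -/
theorem stmt5 {Ω 𝒳0 𝒳 : Type} {L : ℕ} [Fintype Ω] [Fintype 𝒳0] [DecidableEq 𝒳0]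
    [Fintype 𝒳] [DecidableEq 𝒳] (P : FinProb Ω) (Xr : Ω → 𝒳0)
    (XA : Finset (Fin L) → Ω → 𝒳) (S T : Finset (Fin L)) (hST : S ⊂ T) :
    psi P Xr XA S ≤ psi P Xr XA T := by
  have hpow : S.powerset ⊆ T.powerset := Finset.powerset_mono.mpr hST.subset
  have hchain := H_tup_union_sub_le P XA Xr S.powerset (T.powerset \ S.powerset)
    fun A hA => by
      rw [Finset.union_sdiff_of_subset hpow]
      exact (Finset.erase_subset A _).trans
        (Finset.powerset_mono.mpr (Finset.mem_powerset.mp (Finset.mem_sdiff.mp hA).1))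
  rw [Finset.union_sdiff_of_subset hpow] at hchain
  have hsum := Finset.sum_sdiff hpow (f := fun A => Hcond P (XA A) (tup XA (A.powerset.erase A)))
  have hMI : ((S.card : ℝ) - 1) * MI P Xr (XA ∅) ≤ ((T.card : ℝ) - 1) * MI P Xr (XA ∅) := by
    gcongr
    exact MI_nonneg P Xr (XA ∅)
  simp only [psi, Hcond] at hchain hsum ⊢
  linarith
end

section
/- With ψ as above (normalized, nondecreasing, supermodular), the rate region {(R_1,…,R_L) ∈ ℝ^L : Σ_{k∈𝒦} R_k ≥ ψ(𝒦) for all nonempty 𝒦 ⊆ {1,…,L}} is a contra-polymatroid; in particular, for each permutation π of {1,…,L}, the point with R_{π(1)} = ψ({π(1)}) and R_{π(k)} = ψ({π(1),…,π(k)}) − ψ({π(1),…,π(k−1)}) for k ≥ 2 lies in the region and is a vertex of it. -/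
open scoped BigOperators

open MDC

open Finset

section Aux
variable {L : ℕ} (ψ : Finset (Fin L) → ℝ) (π : Equiv.Perm (Fin L))

lemma mem_image_perm (s : Finset (Fin L)) (k : Fin L) :
    k ∈ s.image π ↔ π.symm k ∈ s := by
  simp only [Finset.mem_image]
  constructor
  · rintro ⟨a, ha, rfl⟩; simpa using ha
  · intro h; exact ⟨π.symm k, h, by simp⟩

lemma Iio_cases (j : Fin L) :
    (j.val = 0 ∧ Iio j = (∅ : Finset (Fin L))) ∨
      ∃ j' : Fin L, j'.val = j.val - 1 ∧ j'.val < j.val ∧ Iio j = Iic j' := by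
  by_cases hj : j.val = 0
  · exact Or.inl ⟨hj, by ext k; simp [Fin.lt_def, hj]⟩
  · have hlt : j.val - 1 < L := lt_of_le_of_lt (Nat.pred_le _) j.isLt
    refine Or.inr ⟨⟨j.val - 1, hlt⟩, rfl, by show j.val - 1 < j.val; omega, ?_⟩
    ext k
    simp only [Finset.mem_Iio, Finset.mem_Iic]
    rw [Fin.lt_def, Fin.le_def]
    show k.val < j.val ↔ k.val ≤ j.val - 1
    omega

lemma sum_Iic_tele (h0 : ψ (∅ : Finset (Fin L)) = 0) :
    ∀ n : ℕ, ∀ j : Fin L, j.val = n →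
      ∑ k ∈ Iic j, (ψ ((Iic k).image π) - ψ ((Iio k).image π)) = ψ ((Iic j).image π) := by
  intro n
  induction n using Nat.strong_induction_on with
  | _ n ih =>
    intro j hj
    have hins : Iic j = insert j (Iio j) := (Finset.Iio_insert j).symm
    have hnm : j ∉ Iio j := by simp
    rw [hins, Finset.sum_insert hnm, ← hins]
    rcases Iio_cases j with ⟨_, he⟩ | ⟨j', _, hlt, he⟩
    · rw [he]; simp [h0]
    · rw [he, ih j'.val (by omega) j' rfl, ← he]
      ring

lemma telescope (h0 : ψ (∅ : Finset (Fin L)) = 0) (x : Fin L → ℝ)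
    (hx : ∀ j : Fin L, ∑ k ∈ Iic j, x (π k) = ψ ((Iic j).image π)) :
    ∀ j : Fin L, ∑ k ∈ Iio j, x (π k) = ψ ((Iio j).image π) := by
  intro j
  rcases Iio_cases j with ⟨_, he⟩ | ⟨j', _, _, he⟩
  · simp [he, h0]
  · rw [he]; exact hx j'

end Aux

/-- The rate region of a normalized nondecreasing supermodular set function is a
contra-polymatroid: every permutation yields a vertex (extreme point) of the region. -/
theorem stmt7 {L : ℕ} (ψ : Finset (Fin L) → ℝ) (h0 : ψ ∅ = 0)
    (hnonneg : ∀ S, 0 ≤ ψ S)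
    (hmono : ∀ S T, S ⊆ T → ψ S ≤ ψ T)
    (hsuper : ∀ S T, ψ S + ψ T ≤ ψ (S ∪ T) + ψ (S ∩ T))
    (π : Equiv.Perm (Fin L)) :
    let region : Set (Fin L → ℝ) :=
      {R | ∀ K : Finset (Fin L), K.Nonempty → ψ K ≤ ∑ k ∈ K, R k}
    let R : Fin L → ℝ := fun i =>
      ψ (Finset.image π (Finset.Iic (π.symm i))) - ψ (Finset.image π (Finset.Iio (π.symm i)))
    R ∈ region ∧ R ∈ Set.extremePoints ℝ region := by
  intro region R
  have hinj : Function.Injective (π : Fin L → Fin L) := π.injective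
  have hRπ : ∀ k : Fin L, R (π k) = ψ ((Iic k).image π) - ψ ((Iio k).image π) := by
    intro k; simp only [R, Equiv.symm_apply_apply]
  -- sum of R over chains
  have hsumR : ∀ j : Fin L, ∑ i ∈ (Iic j).image π, R i = ψ ((Iic j).image π) := by
    intro j
    rw [Finset.sum_image (fun a _ b _ h => hinj h)]
    calc ∑ k ∈ Iic j, R (π k)
        = ∑ k ∈ Iic j, (ψ ((Iic k).image π) - ψ ((Iio k).image π)) := by
          exact Finset.sum_congr rfl fun k _ => hRπ k
      _ = ψ ((Iic j).image π) := sum_Iic_tele ψ π h0 j.val j rfl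
  -- greedy lemma : membership
  have hmem : ∀ K : Finset (Fin L), ψ K ≤ ∑ k ∈ K, R k := by
    intro K
    induction K using Finset.strongInductionOn with
    | _ K ih =>
      rcases K.eq_empty_or_nonempty with rfl | hK
      · simp [h0]
      · have hKim : (K.image π.symm).Nonempty := hK.image _
        set j : Fin L := (K.image π.symm).max' hKim with hjdef
        have hjmem : π j ∈ K := by
          have := Finset.max'_mem (K.image π.symm) hKim
          rw [Finset.mem_image] at this
          obtain ⟨k, hk, hkj⟩ := this
          have h1 : π.symm k = j := by rw [hjdef]; exact hkj
          have : k = π j := by rw [← h1]; simp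
          rwa [← this]
        have hle : ∀ k ∈ K, π.symm k ≤ j := fun k hk =>
          Finset.le_max' _ _ (Finset.mem_image_of_mem _ hk)
        have hKsub : K ⊆ (Iic j).image π := by
          intro k hk
          rw [mem_image_perm]
          exact Finset.mem_Iic.mpr (hle k hk)
        have hAsub : (Iio j).image π ⊆ (Iic j).image π :=
          Finset.image_subset_image (fun k hk => Finset.mem_Iic.mpr (le_of_lt (Finset.mem_Iio.mp hk)))
        have hcap : K ∩ (Iio j).image π = K.erase (π j) := by
          ext k
          simp only [Finset.mem_inter, Finset.mem_erase, mem_image_perm, Finset.mem_Iio]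
          constructor
          · rintro ⟨hkK, hklt⟩
            refine ⟨?_, hkK⟩
            intro h; rw [h] at hklt; simp at hklt
          · rintro ⟨hne, hkK⟩
            refine ⟨hkK, lt_of_le_of_ne (hle k hkK) ?_⟩
            intro h
            exact hne (by rw [← h]; simp)
        have hsup := hsuper K ((Iio j).image π)
        rw [hcap] at hsup
        have hcup : ψ (K ∪ (Iio j).image π) ≤ ψ ((Iic j).image π) :=
          hmono _ _ (Finset.union_subset hKsub hAsub)
        have herase : ψ (K.erase (π j)) ≤ ∑ k ∈ K.erase (π j), R k :=
          ih _ (Finset.erase_ssubset hjmem)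
        have hsum : ∑ k ∈ K, R k = R (π j) + ∑ k ∈ K.erase (π j), R k :=
          (Finset.add_sum_erase K R hjmem).symm
        rw [hsum, hRπ j]
        linarith
  refine ⟨fun K hK => hmem K, ?_⟩
  rw [mem_extremePoints]
  refine ⟨fun K hK => hmem K, ?_⟩
  intro x₁ hx₁ x₂ hx₂ hseg
  obtain ⟨a, b, ha, hb, hab, habR⟩ := hseg
  -- both points achieve equality on all chain constraints
  have key : ∀ x ∈ region, ∀ j : Fin L, (∀ j : Fin L, ψ ((Iic j).image π) ≤ ∑ k ∈ Iic j, x (π k)) := by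
    intro x hx j j'
    have := hx ((Iic j').image π) ⟨π j', by rw [mem_image_perm]; simp⟩
    rwa [Finset.sum_image (fun a _ b _ h => hinj h)] at this
  have heqc : ∀ j : Fin L, ∑ k ∈ Iic j, x₁ (π k) = ψ ((Iic j).image π) ∧
      ∑ k ∈ Iic j, x₂ (π k) = ψ ((Iic j).image π) := by
    intro j
    have h1 := key x₁ hx₁ j j
    have h2 := key x₂ hx₂ j j
    have hcomb : a * ∑ k ∈ Iic j, x₁ (π k) + b * ∑ k ∈ Iic j, x₂ (π k)
        = ψ ((Iic j).image π) := by
      have : ∑ k ∈ Iic j, R (π k) = ψ ((Iic j).image π) := by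
        have := hsumR j
        rwa [Finset.sum_image (fun a _ b _ h => hinj h)] at this
      rw [← this, Finset.mul_sum, Finset.mul_sum, ← Finset.sum_add_distrib]
      refine Finset.sum_congr rfl fun k _ => ?_
      have := congrFun habR (π k)
      simpa using this
    set s1 := ∑ k ∈ Iic j, x₁ (π k) with hs1
    set s2 := ∑ k ∈ Iic j, x₂ (π k) with hs2
    set c := ψ ((Iic j).image π) with hc
    have h1' : 0 ≤ s1 - c := by linarith
    have h2' : 0 ≤ s2 - c := by linarith
    have key0 : a * (s1 - c) + b * (s2 - c) = 0 := by
      have hr : a * (s1 - c) + b * (s2 - c) = (a * s1 + b * s2) - (a + b) * c := by ring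
      rw [hr, hab, hcomb]; ring
    have t1 : 0 ≤ a * (s1 - c) := mul_nonneg ha.le h1'
    have t2 : 0 ≤ b * (s2 - c) := mul_nonneg hb.le h2'
    have e1 : a * (s1 - c) = 0 := by linarith
    have e2 : b * (s2 - c) = 0 := by linarith
    have f1 : s1 - c = 0 := by
      rcases mul_eq_zero.mp e1 with h | h
      · exact absurd h (ne_of_gt ha)
      · exact h
    have f2 : s2 - c = 0 := by
      rcases mul_eq_zero.mp e2 with h | h
      · exact absurd h (ne_of_gt hb)
      · exact h
    constructor <;> linarith
  have hx1R : x₁ = R := by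
    funext i
    have hi : i = π (π.symm i) := by simp
    rw [hi, hRπ (π.symm i)]
    set k := π.symm i
    have hIic := (heqc k).1
    have hIio := telescope ψ π h0 x₁ (fun j => (heqc j).1) k
    have hins : Iic k = insert k (Iio k) := (Finset.Iio_insert k).symm
    have hnm : k ∉ Iio k := by simp
    have hsum' : ∑ t ∈ Iic k, x₁ (π t) = x₁ (π k) + ∑ t ∈ Iio k, x₁ (π t) := by
      rw [hins, Finset.sum_insert hnm]
    rw [hsum'] at hIic
    linarith
  have hx2R : x₂ = R := by
    funext i
    have hi : i = π (π.symm i) := by simp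
    rw [hi, hRπ (π.symm i)]
    set k := π.symm i
    have hIic := (heqc k).2
    have hIio := telescope ψ π h0 x₂ (fun j => (heqc j).2) k
    have hins : Iic k = insert k (Iio k) := (Finset.Iio_insert k).symm
    have hnm : k ∉ Iio k := by simp
    have hsum' : ∑ t ∈ Iic k, x₂ (π t) = x₂ (π k) + ∑ t ∈ Iio k, x₂ (π t) := by
      rw [hins, Finset.sum_insert hnm]
    rw [hsum'] at hIic
    linarith
  exact ⟨hx1R, hx2R⟩
end

section
/- Let ψ : 2^{{1,…,L}} → ℝ be normalized (ψ(∅)=0), nondecreasing, and supermodular, and let α_1 ≥ α_2 ≥ ⋯ ≥ α_L ≥ 0. Then the minimum of Σ_k α_k R_k over the contra-polymatroid {R : Σ_{k∈𝒦} R_k ≥ ψ(𝒦) for all nonempty 𝒦} is attained at the greedy vertex R_1 = ψ({1}), R_k = ψ({1,…,k}) − ψ({1,…,k−1}), and equals Σ_{k=1}^L α_k (ψ({1,…,k}) − ψ({1,…,k−1})). -/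
open scoped BigOperators

open MDC

namespace GreedyAux

/-- First `n` elements of `Fin L`. -/
def Sset (L n : ℕ) : Finset (Fin L) := Finset.univ.filter (fun k => (k : ℕ) < n)

lemma mem_Sset {L n : ℕ} {k : Fin L} : k ∈ Sset L n ↔ (k : ℕ) < n := by
  simp [Sset]

lemma Sset_zero (L : ℕ) : Sset L 0 = ∅ := by
  ext j; simp [Sset]

lemma Iio_eq {L : ℕ} (k : Fin L) : Finset.Iio k = Sset L k.val := by
  ext j; rw [Finset.mem_Iio, mem_Sset, Fin.lt_def]

lemma Iic_eq {L : ℕ} (k : Fin L) : Finset.Iic k = Sset L (k.val + 1) := by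
  ext j; rw [Finset.mem_Iic, mem_Sset, Fin.le_def, Nat.lt_succ_iff]

/-- Extension of a function on `Fin L` to `ℕ` by zero. -/
noncomputable def ext {L : ℕ} (f : Fin L → ℝ) (n : ℕ) : ℝ :=
  if h : n < L then f ⟨n, h⟩ else 0

lemma sum_Sset {L : ℕ} (w : Fin L → ℝ) {n : ℕ} (hn : n ≤ L) :
    ∑ k ∈ Sset L n, w k = ∑ m ∈ Finset.range n, ext w m := by
  rw [Sset, Finset.sum_filter]
  have h1 : ∀ k : Fin L, (if (k : ℕ) < n then w k else 0)
      = (fun m => if m < n then ext w m else 0) (k : ℕ) := by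
    intro k
    by_cases h : (k : ℕ) < n <;> simp [h, ext, k.isLt]
  calc ∑ k : Fin L, (if (k : ℕ) < n then w k else 0)
      = ∑ k : Fin L, (fun m => if m < n then ext w m else 0) (k : ℕ) :=
        Finset.sum_congr rfl (fun k _ => h1 k)
    _ = ∑ m ∈ Finset.range L, (if m < n then ext w m else 0) :=
        Fin.sum_univ_eq_sum_range (fun m => if m < n then ext w m else 0) L
    _ = ∑ m ∈ Finset.range n, ext w m := by
        rw [← Finset.sum_range_add_sum_Ico _ hn]
        have h2 : ∑ m ∈ Finset.Ico n L, (if m < n then ext w m else 0) = 0 := by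
          apply Finset.sum_eq_zero
          intro m hm
          rw [Finset.mem_Ico] at hm
          simp [Nat.not_lt.mpr hm.1]
        have h3 : ∀ m ∈ Finset.range n, (if m < n then ext w m else 0) = ext w m := by
          intro m hm
          rw [Finset.mem_range] at hm
          simp [hm]
        rw [h2, add_zero, Finset.sum_congr rfl h3]

/-- Abel summation. -/
lemma abel (N : ℕ) (a v : ℕ → ℝ) :
    ∑ n ∈ Finset.range N, a n * v n
      = (∑ n ∈ Finset.range N, (a n - a (n + 1)) * ∑ m ∈ Finset.range (n + 1), v m)
        + a N * ∑ m ∈ Finset.range N, v m := by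
  induction N with
  | zero => simp
  | succ N ih =>
    rw [Finset.sum_range_succ, ih,
      Finset.sum_range_succ (fun n => (a n - a (n + 1)) * ∑ m ∈ Finset.range (n + 1), v m),
      Finset.sum_range_succ v]
    ring

lemma fin_sum_eq {L : ℕ} (α w : Fin L → ℝ) :
    ∑ k, α k * w k
      = ∑ n ∈ Finset.range L, (ext α n - ext α (n + 1)) * ∑ k ∈ Sset L (n + 1), w k := by
  have h1 : ∑ k, α k * w k = ∑ n ∈ Finset.range L, ext α n * ext w n := by
    rw [← Fin.sum_univ_eq_sum_range (fun n => ext α n * ext w n) L]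
    apply Finset.sum_congr rfl
    intro k _
    simp [ext, k.isLt]
  rw [h1, abel, ext, dif_neg (lt_irrefl L), zero_mul, add_zero]
  apply Finset.sum_congr rfl
  intro n hn
  rw [Finset.mem_range] at hn
  rw [sum_Sset w (by omega)]

lemma greedy_sum {L : ℕ} (ψ : Finset (Fin L) → ℝ) (h0 : ψ ∅ = 0) {n : ℕ} (hn : n < L) :
    ∑ k ∈ Sset L (n + 1), (ψ (Finset.Iic k) - ψ (Finset.Iio k)) = ψ (Sset L (n + 1)) := by
  rw [sum_Sset _ (by omega : n + 1 ≤ L)]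
  have h1 : ∀ m ∈ Finset.range (n + 1),
      ext (fun k : Fin L => ψ (Finset.Iic k) - ψ (Finset.Iio k)) m
        = ψ (Sset L (m + 1)) - ψ (Sset L m) := by
    intro m hm
    rw [Finset.mem_range] at hm
    have hmL : m < L := by omega
    rw [ext, dif_pos hmL, Iic_eq, Iio_eq]
  rw [Finset.sum_congr rfl h1, Finset.sum_range_sub (fun m => ψ (Sset L m)), Sset_zero, h0,
    sub_zero]

lemma mem_region {L : ℕ} (ψ : Finset (Fin L) → ℝ) (h0 : ψ ∅ = 0)
    (hsuper : ∀ S T, ψ S + ψ T ≤ ψ (S ∪ T) + ψ (S ∩ T)) :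
    ∀ K : Finset (Fin L), ψ K ≤ ∑ k ∈ K, (ψ (Finset.Iic k) - ψ (Finset.Iio k)) := by
  intro K
  induction K using Finset.strongInduction with
  | _ K ih =>
    rcases K.eq_empty_or_nonempty with rfl | hK
    · simp [h0]
    · set m := K.max' hK with hm
      have hmK : m ∈ K := K.max'_mem hK
      have hunion : K ∪ Finset.Iio m = Finset.Iic m := by
        ext j
        simp only [Finset.mem_union, Finset.mem_Iio, Finset.mem_Iic]
        constructor
        · rintro (hj | hj)
          · exact K.le_max' j hj
          · exact hj.le
        · intro hj
          rcases lt_or_eq_of_le hj with h | h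
          · exact Or.inr h
          · exact Or.inl (h ▸ hmK)
      have hinter : K ∩ Finset.Iio m = K.erase m := by
        ext j
        simp only [Finset.mem_inter, Finset.mem_Iio, Finset.mem_erase]
        constructor
        · rintro ⟨hj, hlt⟩
          exact ⟨ne_of_lt hlt, hj⟩
        · rintro ⟨hne, hj⟩
          exact ⟨hj, lt_of_le_of_ne (K.le_max' j hj) hne⟩
      have hsup := hsuper K (Finset.Iio m)
      rw [hunion, hinter] at hsup
      have hih := ih (K.erase m) (Finset.erase_ssubset hmK)
      rw [← Finset.sum_erase_add K _ hmK]
      linarith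

end GreedyAux

open GreedyAux in
/-- Greedy algorithm for contra-polymatroids: for α₁ ≥ ⋯ ≥ α_L ≥ 0 the weighted sum
rate is minimized at the greedy vertex. -/
theorem stmt8 {L : ℕ} (ψ : Finset (Fin L) → ℝ) (h0 : ψ ∅ = 0)
    (hmono : ∀ S T, S ⊆ T → ψ S ≤ ψ T)
    (hsuper : ∀ S T, ψ S + ψ T ≤ ψ (S ∪ T) + ψ (S ∩ T))
    (α : Fin L → ℝ) (hα : ∀ i j : Fin L, i ≤ j → α j ≤ α i) (hα0 : ∀ i, 0 ≤ α i) :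
    let region : Set (Fin L → ℝ) :=
      {R | ∀ K : Finset (Fin L), K.Nonempty → ψ K ≤ ∑ k ∈ K, R k}
    let R : Fin L → ℝ := fun k => ψ (Finset.Iic k) - ψ (Finset.Iio k)
    R ∈ region ∧
    IsLeast {x : ℝ | ∃ R' ∈ region, x = ∑ k, α k * R' k} (∑ k, α k * R k) := by
  intro region R
  have hmem : R ∈ region := fun K _ => mem_region ψ h0 hsuper K
  refine ⟨hmem, ⟨R, hmem, rfl⟩, ?_⟩
  rintro x ⟨R', hR', rfl⟩
  rw [fin_sum_eq α R, fin_sum_eq α R']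
  apply Finset.sum_le_sum
  intro n hn
  have hnL : n < L := Finset.mem_range.mp hn
  have hcoef : 0 ≤ ext α n - ext α (n + 1) := by
    by_cases h : n + 1 < L
    · rw [ext, ext, dif_pos hnL, dif_pos h, sub_nonneg]
      exact hα ⟨n, hnL⟩ ⟨n + 1, h⟩ (by simp [Fin.le_def])
    · rw [ext, ext, dif_pos hnL, dif_neg h, sub_zero]
      exact hα0 _
  apply mul_le_mul_of_nonneg_left _ hcoef
  have hgreedy : ∑ k ∈ Sset L (n + 1), R k = ψ (Sset L (n + 1)) := greedy_sum ψ h0 hnL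
  rw [hgreedy]
  exact hR' (Sset L (n + 1)) ⟨⟨n, hnL⟩, mem_Sset.mpr (Nat.lt_succ_self n)⟩
end

section
/- Let X be uniform on {0,1} with Hamming distortion. Suppose X, X_1, X_{12} are jointly distributed with X_1, X_{12} ∈ {0,1}, E[d(X,X_{12})] ≤ D_{12}, and I(X; X_1, X_{12}) = I(X; X_{12}) = 1 − H_b(D_{12}) with 0 ≤ D_{12} < 1/2. Then X − X_{12} − X_1 form a Markov chain and p_{X_{12}|X} is a binary symmetric channel with crossover probability exactly D_{12} (i.e., P(X_{12} ≠ X) = D_{12} and P(X_{12}=1|X=0) = P(X_{12}=0|X=1) = D_{12}). -/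
open scoped BigOperators

open Real in
lemma prim_le (a b c d : ℝ) (ha : 0 ≤ a) (hab : a ≤ b) (hc : 0 ≤ c) (hcd : c ≤ d) :
    a * (log b - log a) + c * (log d - log c)
      ≤ (a + c) * (log (b + d) - log (a + c)) := by
  rcases ha.eq_or_lt with h | hapos
  · rcases hc.eq_or_lt with h' | hcpos
    · simp [← h, ← h']
    · have hd0 : 0 < d := lt_of_lt_of_le hcpos hcd
      have hlog : log d ≤ log (b + d) := log_le_log hd0 (by linarith)
      have := mul_le_mul_of_nonneg_left hlog hc
      simp only [← h, zero_mul, zero_add]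
      nlinarith
  · rcases hc.eq_or_lt with h' | hcpos
    · have hb0 : 0 < b := lt_of_lt_of_le hapos hab
      have hlog : log b ≤ log (b + d) := log_le_log hb0 (by linarith)
      have := mul_le_mul_of_nonneg_left hlog ha
      simp only [← h', zero_mul, add_zero]
      nlinarith
    · have hb0 : 0 < b := lt_of_lt_of_le hapos hab
      have hd0 : 0 < d := lt_of_lt_of_le hcpos hcd
      have hac : 0 < a + c := by linarith
      have hbd : 0 < b + d := by linarith
      have k1 : log (b * (a + c) / (a * (b + d))) ≤ b * (a + c) / (a * (b + d)) - 1 :=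
        log_le_sub_one_of_pos (by positivity)
      have k2 : log (d * (a + c) / (c * (b + d))) ≤ d * (a + c) / (c * (b + d)) - 1 :=
        log_le_sub_one_of_pos (by positivity)
      have l1 : log (b * (a + c) / (a * (b + d)))
          = log b + log (a + c) - log a - log (b + d) := by
        rw [log_div (by positivity) (by positivity), log_mul (by positivity) (by positivity),
          log_mul (by positivity) (by positivity)]; ring
      have l2 : log (d * (a + c) / (c * (b + d)))
          = log d + log (a + c) - log c - log (b + d) := by
        rw [log_div (by positivity) (by positivity), log_mul (by positivity) (by positivity),
          log_mul (by positivity) (by positivity)]; ring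
      rw [l1] at k1; rw [l2] at k2
      have m1 := mul_le_mul_of_nonneg_left k1 ha
      have m2 := mul_le_mul_of_nonneg_left k2 hc
      have key : a * (b * (a + c) / (a * (b + d)) - 1) + c * (d * (a + c) / (c * (b + d)) - 1) = 0 := by
        field_simp
        ring
      nlinarith [m1, m2, key]

open Real in
lemma prim_lt (a b c d : ℝ) (ha : 0 ≤ a) (hab : a ≤ b) (hc : 0 ≤ c) (hcd : c ≤ d)
    (hne : a * d ≠ b * c) :
    a * (log b - log a) + c * (log d - log c)
      < (a + c) * (log (b + d) - log (a + c)) := by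
  rcases ha.eq_or_lt with h | hapos
  · -- a = 0, so b*c ≠ 0, b > 0, c > 0, d > 0
    have hbc : b * c ≠ 0 := by simpa [← h] using hne.symm
    have hb0 : 0 < b := lt_of_le_of_ne (le_trans ha hab) (by rintro rfl; simp at hbc)
    have hc0 : 0 < c := lt_of_le_of_ne hc (by rintro rfl; simp at hbc)
    have hd0 : 0 < d := lt_of_lt_of_le hc0 hcd
    have hlog : log d < log (b + d) := log_lt_log hd0 (by linarith)
    have := mul_lt_mul_of_pos_left hlog hc0
    simp only [← h, zero_mul, zero_add]
    nlinarith
  · rcases hc.eq_or_lt with h' | hcpos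
    · have had : a * d ≠ 0 := by simpa [← h'] using hne
      have hd0 : 0 < d := lt_of_le_of_ne (le_trans (le_of_eq h') hcd) (by rintro rfl; simp at had)
      have hb0 : 0 < b := lt_of_lt_of_le hapos hab
      have hlog : log b < log (b + d) := log_lt_log hb0 (by linarith)
      have := mul_lt_mul_of_pos_left hlog hapos
      simp only [← h', zero_mul, add_zero]
      nlinarith
    · have hb0 : 0 < b := lt_of_lt_of_le hapos hab
      have hd0 : 0 < d := lt_of_lt_of_le hcpos hcd
      have hac : 0 < a + c := by linarith
      have hbd : 0 < b + d := by linarith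
      have hne1 : b * (a + c) / (a * (b + d)) ≠ 1 := by
        intro hcon
        rw [div_eq_iff (by positivity : a * (b + d) ≠ 0), one_mul] at hcon
        apply hne
        nlinarith
      have k1 : log (b * (a + c) / (a * (b + d))) < b * (a + c) / (a * (b + d)) - 1 :=
        log_lt_sub_one_of_pos (by positivity) hne1
      have k2 : log (d * (a + c) / (c * (b + d))) ≤ d * (a + c) / (c * (b + d)) - 1 :=
        log_le_sub_one_of_pos (by positivity)
      have l1 : log (b * (a + c) / (a * (b + d)))
          = log b + log (a + c) - log a - log (b + d) := by
        rw [log_div (by positivity) (by positivity), log_mul (by positivity) (by positivity),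
          log_mul (by positivity) (by positivity)]; ring
      have l2 : log (d * (a + c) / (c * (b + d)))
          = log d + log (a + c) - log c - log (b + d) := by
        rw [log_div (by positivity) (by positivity), log_mul (by positivity) (by positivity),
          log_mul (by positivity) (by positivity)]; ring
      rw [l1] at k1; rw [l2] at k2
      have m1 := mul_lt_mul_of_pos_left k1 hapos
      have m2 := mul_le_mul_of_nonneg_left k2 hc
      have key : a * (b * (a + c) / (a * (b + d)) - 1) + c * (d * (a + c) / (c * (b + d)) - 1) = 0 := by
        field_simp
        ring
      nlinarith [m1, m2, key]

open Real in
lemma pair_le (u0 v0 u1 v1 : ℝ) (h0 : 0 ≤ u0) (h1 : 0 ≤ v0) (h2 : 0 ≤ u1) (h3 : 0 ≤ v1) :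
    (negMulLog u0 + negMulLog v0 - negMulLog (u0 + v0))
      + (negMulLog u1 + negMulLog v1 - negMulLog (u1 + v1))
      ≤ negMulLog (u0 + u1) + negMulLog (v0 + v1)
        - negMulLog ((u0 + u1) + (v0 + v1)) := by
  have P1 := prim_le u0 (u0 + v0) u1 (u1 + v1) h0 (by linarith) h2 (by linarith)
  have P2 := prim_le v0 (u0 + v0) v1 (u1 + v1) h1 (by linarith) h3 (by linarith)
  have e : (u0 + v0) + (u1 + v1) = (u0 + u1) + (v0 + v1) := by ring
  rw [e] at P1 P2
  simp only [negMulLog]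
  nlinarith [P1, P2]

open Real in
lemma pair_lt (u0 v0 u1 v1 : ℝ) (h0 : 0 ≤ u0) (h1 : 0 ≤ v0) (h2 : 0 ≤ u1) (h3 : 0 ≤ v1)
    (hne : u0 * v1 ≠ u1 * v0) :
    (negMulLog u0 + negMulLog v0 - negMulLog (u0 + v0))
      + (negMulLog u1 + negMulLog v1 - negMulLog (u1 + v1))
      < negMulLog (u0 + u1) + negMulLog (v0 + v1)
        - negMulLog ((u0 + u1) + (v0 + v1)) := by
  have P1 := prim_lt u0 (u0 + v0) u1 (u1 + v1) h0 (by linarith) h2 (by linarith)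
    (fun h => hne (by linear_combination h))
  have P2 := prim_le v0 (u0 + v0) v1 (u1 + v1) h1 (by linarith) h3 (by linarith)
  have e : (u0 + v0) + (u1 + v1) = (u0 + u1) + (v0 + v1) := by ring
  rw [e] at P1 P2
  simp only [negMulLog]
  nlinarith [P1, P2]

open Real in
lemma pair_eq (u0 v0 u1 v1 : ℝ) (h0 : 0 ≤ u0) (h1 : 0 ≤ v0) (h2 : 0 ≤ u1) (h3 : 0 ≤ v1)
    (h : negMulLog (u0 + u1) + negMulLog (v0 + v1)
        - negMulLog ((u0 + u1) + (v0 + v1))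
      ≤ (negMulLog u0 + negMulLog v0 - negMulLog (u0 + v0))
      + (negMulLog u1 + negMulLog v1 - negMulLog (u1 + v1))) :
    u0 * v1 = u1 * v0 := by
  by_contra hne
  exact absurd h (not_le.2 (pair_lt u0 v0 u1 v1 h0 h1 h2 h3 hne))

open Real in
lemma core (D12 : ℝ) (h0 : 0 ≤ D12) (h1 : D12 < 1/2)
    (q000 q001 q010 q011 q100 q101 q110 q111 r00 r01 r10 r11 w00 w01 w10 w11 s0 s1 E : ℝ)
    (n000 : 0 ≤ q000) (n001 : 0 ≤ q001) (n010 : 0 ≤ q010) (n011 : 0 ≤ q011)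
    (n100 : 0 ≤ q100) (n101 : 0 ≤ q101) (n110 : 0 ≤ q110) (n111 : 0 ≤ q111)
    (hr00 : r00 = q000 + q010) (hr01 : r01 = q001 + q011)
    (hr10 : r10 = q100 + q110) (hr11 : r11 = q101 + q111)
    (hw00 : w00 = q000 + q100) (hw10 : w10 = q010 + q110)
    (hw01 : w01 = q001 + q101) (hw11 : w11 = q011 + q111)
    (hs0 : s0 = r00 + r10) (hs1 : s1 = r01 + r11)
    (hE : E = r01 + r10)
    (hx0 : r00 + r01 = 1/2) (hx1 : r10 + r11 = 1/2)
    (hd : E ≤ D12)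
    (E1 : (negMulLog q000 + negMulLog q100 + negMulLog q010 + negMulLog q110
          + negMulLog q001 + negMulLog q101 + negMulLog q011 + negMulLog q111)
          - (negMulLog w00 + negMulLog w10 + negMulLog w01 + negMulLog w11)
          = Real.binEntropy D12)
    (E2 : (negMulLog r00 + negMulLog r10 + negMulLog r01 + negMulLog r11)
          - (negMulLog s0 + negMulLog s1) = Real.binEntropy D12) :
    q000 * q110 = q010 * q100 ∧ q001 * q111 = q011 * q101 ∧ E = D12 ∧
      r00 = (1 - D12)/2 ∧ r01 = D12/2 ∧ r10 = D12/2 ∧ r11 = (1 - D12)/2 := by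
  subst hr00 hr01 hr10 hr11 hw00 hw10 hw01 hw11 hs0 hs1 hE
  -- conditioning inequalities per value of X12
  have iA0 := pair_le q000 q100 q010 q110 n000 n100 n010 n110
  have iA1 := pair_le q001 q101 q011 q111 n001 n101 n011 n111
  have eA0 : negMulLog (q000 + q010) + negMulLog (q100 + q110)
      - negMulLog ((q000 + q010) + (q100 + q110))
      ≤ (negMulLog q000 + negMulLog q100 - negMulLog (q000 + q100))
      + (negMulLog q010 + negMulLog q110 - negMulLog (q010 + q110)) := by linarith
  have eA1 : negMulLog (q001 + q011) + negMulLog (q101 + q111)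
      - negMulLog ((q001 + q011) + (q101 + q111))
      ≤ (negMulLog q001 + negMulLog q101 - negMulLog (q001 + q101))
      + (negMulLog q011 + negMulLog q111 - negMulLog (q011 + q111)) := by linarith
  have det0 := pair_eq q000 q100 q010 q110 n000 n100 n010 n110 eA0
  have det1 := pair_eq q001 q101 q011 q111 n001 n101 n011 n111 eA1
  -- the X ↔ X12 channel
  have iB := pair_le (q000 + q010) (q100 + q110) (q101 + q111) (q001 + q011)
    (by linarith) (by linarith) (by linarith) (by linarith)
  have c1 : negMulLog ((q101 + q111) + (q001 + q011))
      = negMulLog ((q001 + q011) + (q101 + q111)) := by rw [add_comm (q101 + q111)]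
  have hA3 : ((q000 + q010) + (q101 + q111)) + ((q100 + q110) + (q001 + q011)) = 1 := by
    linarith
  have hnm3 : negMulLog (((q000 + q010) + (q101 + q111)) + ((q100 + q110) + (q001 + q011)))
      = 0 := by rw [hA3, negMulLog_one]
  have h1mE : (q000 + q010) + (q101 + q111) = 1 - ((q001 + q011) + (q100 + q110)) := by
    linarith
  have hA1 : negMulLog ((q000 + q010) + (q101 + q111))
      = negMulLog (1 - ((q001 + q011) + (q100 + q110))) := by rw [h1mE]
  have hA2 : negMulLog ((q100 + q110) + (q001 + q011))
      = negMulLog ((q001 + q011) + (q100 + q110)) := by rw [add_comm (q100 + q110)]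
  have hbe := Real.binEntropy_eq_negMulLog_add_negMulLog_one_sub ((q001 + q011) + (q100 + q110))
  have hBle : Real.binEntropy D12 ≤ Real.binEntropy ((q001 + q011) + (q100 + q110)) := by
    linarith
  have hEnn : 0 ≤ (q001 + q011) + (q100 + q110) := by linarith
  have hEeq : (q001 + q011) + (q100 + q110) = D12 := by
    rcases eq_or_lt_of_le hd with h | h
    · exact h
    · exfalso
      have h2inv : ((2:ℝ)⁻¹) = 1/2 := by norm_num
      have hm := Real.binEntropy_strictMonoOn
        (Set.mem_Icc.2 ⟨hEnn, by rw [h2inv]; linarith⟩)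
        (Set.mem_Icc.2 ⟨h0, by rw [h2inv]; linarith⟩) h
      linarith
  have hbed : Real.binEntropy ((q001 + q011) + (q100 + q110)) = Real.binEntropy D12 := by
    rw [hEeq]
  have eB : negMulLog ((q000 + q010) + (q101 + q111))
      + negMulLog ((q100 + q110) + (q001 + q011))
      - negMulLog (((q000 + q010) + (q101 + q111)) + ((q100 + q110) + (q001 + q011)))
      ≤ (negMulLog (q000 + q010) + negMulLog (q100 + q110)
          - negMulLog ((q000 + q010) + (q100 + q110)))
      + (negMulLog (q101 + q111) + negMulLog (q001 + q011)
          - negMulLog ((q101 + q111) + (q001 + q011))) := by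
    linarith
  have detB := pair_eq (q000 + q010) (q100 + q110) (q101 + q111) (q001 + q011)
    (by linarith) (by linarith) (by linarith) (by linarith) eB
  -- detB : (q000+q010) * (q001+q011) = (q101+q111) * (q100+q110)
  have e01 : q001 + q011 = 1/2 - (q000 + q010) := by linarith
  have e10 : q100 + q110 = D12 - 1/2 + (q000 + q010) := by linarith
  have e11 : q101 + q111 = 1 - D12 - (q000 + q010) := by linarith
  rw [e01, e10, e11] at detB
  have key : (1 - 2*D12) * ((1 - D12)/2 - (q000 + q010)) = 0 := by linear_combination detB
  have hfac : (1:ℝ) - 2*D12 ≠ 0 := by intro h; linarith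
  have hr00v : q000 + q010 = (1 - D12)/2 := by
    rcases mul_eq_zero.1 key with h | h
    · exact absurd h hfac
    · linarith
  refine ⟨det0, det1, hEeq, hr00v, by linarith, by linarith, by linarith⟩


section AuxHelpers

open MDC

variable {Ω : Type*} [Fintype Ω] {A : Type*} [DecidableEq A] {C : Type*} [DecidableEq C]

lemma aux_fin2 : ∀ i : Fin 2, i = 0 ∨ i = 1 := by decide

lemma aux_pr_nonneg (P : FinProb Ω) (f : Ω → A) (a : A) : 0 ≤ pr P f a := by
  unfold pr
  apply Finset.sum_nonneg
  intro ω _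
  split
  · exact P.nonneg ω
  · exact le_rfl

lemma aux_pr_snd2 (P : FinProb Ω) (f : Ω → Fin 2) (g : Ω → A) (b : A) :
    pr P g b = pr P (fun ω => (f ω, g ω)) (0, b) + pr P (fun ω => (f ω, g ω)) (1, b) := by
  unfold pr
  rw [← Finset.sum_add_distrib]
  refine Finset.sum_congr rfl fun ω _ => ?_
  have h01 : (0 : Fin 2) ≠ 1 := by decide
  have h10 : (1 : Fin 2) ≠ 0 := by decide
  rcases aux_fin2 (f ω) with h | h <;> by_cases hg : g ω = b <;>
    simp [h, hg, Prod.ext_iff, h01, h10]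

lemma aux_pr_fst2 (P : FinProb Ω) (f : Ω → A) (g : Ω → Fin 2) (a : A) :
    pr P f a = pr P (fun ω => (f ω, g ω)) (a, 0) + pr P (fun ω => (f ω, g ω)) (a, 1) := by
  unfold pr
  rw [← Finset.sum_add_distrib]
  refine Finset.sum_congr rfl fun ω _ => ?_
  have h01 : (0 : Fin 2) ≠ 1 := by decide
  have h10 : (1 : Fin 2) ≠ 0 := by decide
  rcases aux_fin2 (g ω) with h | h <;> by_cases hf : f ω = a <;>
    simp [h, hf, Prod.ext_iff, h01, h10]

lemma aux_pr_mid2 (P : FinProb Ω) (f : Ω → A) (g : Ω → Fin 2) (h : Ω → C) (x : A) (z : C) :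
    pr P (fun ω => (f ω, h ω)) (x, z)
      = pr P (fun ω => (f ω, g ω, h ω)) (x, 0, z)
        + pr P (fun ω => (f ω, g ω, h ω)) (x, 1, z) := by
  unfold pr
  rw [← Finset.sum_add_distrib]
  refine Finset.sum_congr rfl fun ω _ => ?_
  have h01 : (0 : Fin 2) ≠ 1 := by decide
  have h10 : (1 : Fin 2) ≠ 0 := by decide
  rcases aux_fin2 (g ω) with hh | hh <;> by_cases hf : f ω = x <;> by_cases hz : h ω = z <;>
    simp [hh, hf, hz, Prod.ext_iff, h01, h10]

lemma aux_Edist_fin2 (P : FinProb Ω) (f g : Ω → Fin 2) :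
    Edist P f g = pr P (fun ω => (f ω, g ω)) (0, 1) + pr P (fun ω => (f ω, g ω)) (1, 0) := by
  unfold Edist pr
  rw [← Finset.sum_add_distrib]
  refine Finset.sum_congr rfl fun ω _ => ?_
  have h01 : (0 : Fin 2) ≠ 1 := by decide
  have h10 : (1 : Fin 2) ≠ 0 := by decide
  rcases aux_fin2 (f ω) with h | h <;> rcases aux_fin2 (g ω) with h' | h' <;>
    simp [h, h', Prod.ext_iff, h01, h10]

lemma aux_log2_mul_H (P : FinProb Ω) {B : Type*} [Fintype B] [DecidableEq B] (f : Ω → B) :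
    Real.log 2 * H P f = ∑ a, Real.negMulLog (pr P f a) := by
  have hL : Real.log 2 ≠ 0 := ne_of_gt (Real.log_pos one_lt_two)
  unfold H
  rw [mul_neg, Finset.mul_sum, ← Finset.sum_neg_distrib]
  refine Finset.sum_congr rfl fun a _ => ?_
  simp only [Real.logb, Real.negMulLog]
  field_simp
  try ring

lemma aux_log2_mul_Hb (p : ℝ) : Real.log 2 * Hb p = Real.binEntropy p := by
  have hL : Real.log 2 ≠ 0 := ne_of_gt (Real.log_pos one_lt_two)
  simp only [Hb, Real.logb, Real.binEntropy, Real.log_inv]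
  field_simp
  try ring

end AuxHelpers

open MDC
set_option maxHeartbeats 2000000 in
/-- For a binary symmetric source achieving the rate-distortion bound with the
same information through (X₁,X₁₂) and X₁₂, the Markov chain X − X₁₂ − X₁ holds and
p_{X₁₂|X} is a BSC with crossover exactly D₁₂. -/
theorem stmt13 {Ω : Type} [Fintype Ω] (P : FinProb Ω) (D12 : ℝ)
    (h0 : 0 ≤ D12) (h1 : D12 < 1/2)
    (X X1 X12 : Ω → Fin 2)
    (hunif : ∀ x, pr P X x = 1/2)
    (hd : Edist P X X12 ≤ D12)
    (hI1 : MI P X (fun ω => (X1 ω, X12 ω)) = 1 - Hb D12)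
    (hI2 : MI P X X12 = 1 - Hb D12) :
    CondIndep P X X1 X12 ∧
    Edist P X X12 = D12 ∧
    (∀ x y : Fin 2, pr P (fun ω => (X ω, X12 ω)) (x, y)
      = (if x = y then 1 - D12 else D12) * pr P X x) := by
  have hL : (0:ℝ) < Real.log 2 := Real.log_pos one_lt_two
  -- marginal identities
  have hT2 : ∀ x b : Fin 2, pr P (fun ω => (X ω, X12 ω)) (x, b)
      = pr P (fun ω => (X ω, X1 ω, X12 ω)) (x, 0, b)
        + pr P (fun ω => (X ω, X1 ω, X12 ω)) (x, 1, b) :=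
    fun x b => aux_pr_mid2 P X X1 X12 x b
  have hT1 : ∀ a b : Fin 2, pr P (fun ω => (X1 ω, X12 ω)) (a, b)
      = pr P (fun ω => (X ω, X1 ω, X12 ω)) (0, a, b)
        + pr P (fun ω => (X ω, X1 ω, X12 ω)) (1, a, b) :=
    fun a b => aux_pr_snd2 P X (fun ω => (X1 ω, X12 ω)) (a, b)
  have hS : ∀ b : Fin 2, pr P X12 b
      = pr P (fun ω => (X ω, X12 ω)) (0, b) + pr P (fun ω => (X ω, X12 ω)) (1, b) :=
    fun b => aux_pr_snd2 P X X12 b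
  have hXm : ∀ x : Fin 2, pr P (fun ω => (X ω, X12 ω)) (x, 0)
      + pr P (fun ω => (X ω, X12 ω)) (x, 1) = 1/2 := by
    intro x
    rw [← aux_pr_fst2 P X X12 x, hunif x]
  have hEd := aux_Edist_fin2 P X X12
  -- H(X) = 1
  have hHX : H P X = 1 := by
    have hlb : Real.logb 2 (1/2 : ℝ) = -1 := by
      rw [show (1/2:ℝ) = 2⁻¹ by norm_num, Real.logb_inv,
        Real.logb_self_eq_one (by norm_num : (1:ℝ) < 2)]
    simp only [H, Fin.sum_univ_two, hunif, hlb]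
    norm_num
  -- entropy sums
  have h2T2 := aux_log2_mul_H P (fun ω => (X ω, X12 ω))
  have h2S := aux_log2_mul_H P X12
  have h2T3 := aux_log2_mul_H P (fun ω => (X ω, X1 ω, X12 ω))
  have h2T1 := aux_log2_mul_H P (fun ω => (X1 ω, X12 ω))
  simp only [Fintype.sum_prod_type, Fin.sum_univ_two] at h2T2 h2T3 h2T1
  simp only [Fin.sum_univ_two] at h2S
  have hBE := aux_log2_mul_Hb D12
  -- mutual information equalities
  simp only [MI] at hI1 hI2
  rw [hHX] at hI1 hI2
  have hd2 : H P (fun ω => (X ω, X12 ω)) - H P X12 = Hb D12 := by linarith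
  have hd1 : H P (fun ω => (X ω, X1 ω, X12 ω)) - H P (fun ω => (X1 ω, X12 ω)) = Hb D12 := by
    linarith
  have mul2 : Real.log 2 * (H P (fun ω => (X ω, X12 ω)) - H P X12)
      = Real.log 2 * Hb D12 := by rw [hd2]
  have mul1 : Real.log 2 * (H P (fun ω => (X ω, X1 ω, X12 ω)) - H P (fun ω => (X1 ω, X12 ω)))
      = Real.log 2 * Hb D12 := by rw [hd1]
  have E2' : (Real.negMulLog (pr P (fun ω => (X ω, X12 ω)) (0, 0))
        + Real.negMulLog (pr P (fun ω => (X ω, X12 ω)) (1, 0))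
        + Real.negMulLog (pr P (fun ω => (X ω, X12 ω)) (0, 1))
        + Real.negMulLog (pr P (fun ω => (X ω, X12 ω)) (1, 1)))
      - (Real.negMulLog (pr P X12 0) + Real.negMulLog (pr P X12 1))
      = Real.binEntropy D12 := by
    linarith [mul2, h2T2, h2S, hBE]
  have E1' : (Real.negMulLog (pr P (fun ω => (X ω, X1 ω, X12 ω)) (0, 0, 0))
        + Real.negMulLog (pr P (fun ω => (X ω, X1 ω, X12 ω)) (1, 0, 0))
        + Real.negMulLog (pr P (fun ω => (X ω, X1 ω, X12 ω)) (0, 1, 0))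
        + Real.negMulLog (pr P (fun ω => (X ω, X1 ω, X12 ω)) (1, 1, 0))
        + Real.negMulLog (pr P (fun ω => (X ω, X1 ω, X12 ω)) (0, 0, 1))
        + Real.negMulLog (pr P (fun ω => (X ω, X1 ω, X12 ω)) (1, 0, 1))
        + Real.negMulLog (pr P (fun ω => (X ω, X1 ω, X12 ω)) (0, 1, 1))
        + Real.negMulLog (pr P (fun ω => (X ω, X1 ω, X12 ω)) (1, 1, 1)))
      - (Real.negMulLog (pr P (fun ω => (X1 ω, X12 ω)) (0, 0))
        + Real.negMulLog (pr P (fun ω => (X1 ω, X12 ω)) (1, 0))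
        + Real.negMulLog (pr P (fun ω => (X1 ω, X12 ω)) (0, 1))
        + Real.negMulLog (pr P (fun ω => (X1 ω, X12 ω)) (1, 1)))
      = Real.binEntropy D12 := by
    linarith [mul1, h2T3, h2T1, hBE]
  obtain ⟨det0, det1, hED, hv00, hv01, hv10, hv11⟩ :=
    core D12 h0 h1
      (pr P (fun ω => (X ω, X1 ω, X12 ω)) (0, 0, 0))
      (pr P (fun ω => (X ω, X1 ω, X12 ω)) (0, 0, 1))
      (pr P (fun ω => (X ω, X1 ω, X12 ω)) (0, 1, 0))
      (pr P (fun ω => (X ω, X1 ω, X12 ω)) (0, 1, 1))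
      (pr P (fun ω => (X ω, X1 ω, X12 ω)) (1, 0, 0))
      (pr P (fun ω => (X ω, X1 ω, X12 ω)) (1, 0, 1))
      (pr P (fun ω => (X ω, X1 ω, X12 ω)) (1, 1, 0))
      (pr P (fun ω => (X ω, X1 ω, X12 ω)) (1, 1, 1))
      (pr P (fun ω => (X ω, X12 ω)) (0, 0))
      (pr P (fun ω => (X ω, X12 ω)) (0, 1))
      (pr P (fun ω => (X ω, X12 ω)) (1, 0))
      (pr P (fun ω => (X ω, X12 ω)) (1, 1))
      (pr P (fun ω => (X1 ω, X12 ω)) (0, 0))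
      (pr P (fun ω => (X1 ω, X12 ω)) (0, 1))
      (pr P (fun ω => (X1 ω, X12 ω)) (1, 0))
      (pr P (fun ω => (X1 ω, X12 ω)) (1, 1))
      (pr P X12 0) (pr P X12 1) (Edist P X X12)
      (aux_pr_nonneg _ _ _) (aux_pr_nonneg _ _ _) (aux_pr_nonneg _ _ _) (aux_pr_nonneg _ _ _)
      (aux_pr_nonneg _ _ _) (aux_pr_nonneg _ _ _) (aux_pr_nonneg _ _ _) (aux_pr_nonneg _ _ _)
      (hT2 0 0) (hT2 0 1) (hT2 1 0) (hT2 1 1)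
      (hT1 0 0) (hT1 1 0) (hT1 0 1) (hT1 1 1)
      (hS 0) (hS 1) hEd (hXm 0) (hXm 1) hd E1' E2'
  refine ⟨?_, hED, ?_⟩
  · intro a b c
    rcases aux_fin2 c with rfl | rfl <;> rcases aux_fin2 a with rfl | rfl <;>
      rcases aux_fin2 b with rfl | rfl <;>
      simp only [hS, hT2, hT1] <;>
      first
        | linear_combination det0
        | linear_combination (-1 : ℝ) * det0
        | linear_combination det1
        | linear_combination (-1 : ℝ) * det1
  · intro x y
    rcases aux_fin2 x with rfl | rfl <;> rcases aux_fin2 y with rfl | rfl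
    · rw [if_pos rfl, hunif]; linarith [hv00]
    · rw [if_neg (by decide), hunif]; linarith [hv01]
    · rw [if_neg (by decide), hunif]; linarith [hv10]
    · rw [if_pos rfl, hunif]; linarith [hv11]
end
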